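/- arXiv:2208.07028 — 3 statements merged into one kernel-verified Lean document; each statement's English description precedes it below -/
import Mathlib

section
/- Let F : FintypeCatᵒᵖ ⥤ Type u be a functor preserving finite products (equivalently, sending finite coproducts of finite sets to products of types). Then F is naturally isomorphic to the family functor on M := F(pt), where pt is a one-element finite set: the functor FintypeCatᵒᵖ ⥤ Type u sending a finite set I to the function type I → M and a map f : I → J to the precomposition map (− ∘ f) : (J → M) → (I → M). -/
open CategoryTheory CategoryTheory.Limits

/-- The family functor on a type `M`: it sends a finite set `I` to the
function type `I → M`, and a map `f : I → J` to precomposition with `f`. -/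
def familyFunctor (M : Type u) : FintypeCat.{u}ᵒᵖ ⥤ Type u where
  obj I := I.unop → M
  map f := TypeCat.ofHom (fun x => x ∘ f.unop)

namespace FamilyFunctorAux

/-- The map picking out `x`. -/
def ptMap {X : FintypeCat.{u}} (x : X) : FintypeCat.of PUnit.{u+1} ⟶ X := FintypeCat.homMk fun _ ↦ x

/-- A finite set as a coproduct cocone over itself of copies of `PUnit`. -/
def asCofan (X : FintypeCat.{u}) : Cofan (fun (_ : X) ↦ FintypeCat.of PUnit.{u+1}) :=
  Cofan.mk X (fun x ↦ ptMap x)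

/-- A finite set is the coproduct of its points. -/
def asCofanIsColimit (X : FintypeCat.{u}) : IsColimit (asCofan X) := by
  refine mkCofanColimit _ (fun t ↦ FintypeCat.homMk fun x ↦ t.inj x PUnit.unit) ?_ ?_
  · intro t x
    ext u
    cases u
    rfl
  · intro t m h
    ext x
    exact ConcreteCategory.congr_hom (h x) PUnit.unit

variable (F : FintypeCat.{u}ᵒᵖ ⥤ Type u) [PreservesFiniteProducts F]

/-- Pointwise iso. -/
noncomputable def components (X : FintypeCat.{u}) :
    F.obj (Opposite.op X) ≅ (X → F.obj (Opposite.op (FintypeCat.of PUnit.{u+1}))) :=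
  (isLimitFanMkObjOfIsLimit F _ _
    (Cofan.IsColimit.op (asCofanIsColimit X))).conePointUniqueUpToIso
      (Types.productLimitCone.{u, u} fun _ ↦ F.obj (Opposite.op (FintypeCat.of PUnit.{u+1}))).2

lemma components_hom_apply (X : FintypeCat.{u}) (y : F.obj (Opposite.op X)) (x : X) :
    (components F X).hom y x =
      F.map (ptMap x).op y := rfl

end FamilyFunctorAux

open FamilyFunctorAux in
theorem iso_familyFunctor_of_preservesFiniteProducts
    (F : FintypeCat.{u}ᵒᵖ ⥤ Type u) [PreservesFiniteProducts F] :
    Nonempty (F ≅ familyFunctor (F.obj (Opposite.op (FintypeCat.of PUnit)))) := by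
  refine ⟨NatIso.ofComponents (fun I ↦ components F I.unop) ?_⟩
  intro I J f
  ext y
  funext j
  show (components F J.unop).hom (F.map f y) j = _
  rw [components_hom_apply]
  show _ = (components F I.unop).hom y (f.unop j)
  rw [components_hom_apply, ← FunctorToTypes.map_comp_apply]
  rfl
end

section
/- Let M be a commutative monoid, and let f : I → J, k : I → L, l : J → K, g : L → K be functions between types with I and L finite, such that l ∘ f = g ∘ k and the map from I to the type {(j, z) : J × L // l j = g z} sending i to (f i, k i) is bijective (i.e., the commutative square (f, k, l, g) is a pullback square of types). Then for every y : L → M and every j : J, ∏_{i : I with f i = j} y (k i) = ∏_{z : L with g z = l j} y z, where each product ranges over the finite set of elements satisfying the stated condition. -/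
open Finset

theorem bijOn_fiber_of_bijective_toPullback {I J K L : Type*}
    {f : I → J} {k : I → L} {l : J → K} {g : L → K} (hcomm : ∀ i, l (f i) = g (k i))
    (hbij : Function.Bijective (fun i => (⟨(f i, k i), hcomm i⟩ : Function.Pullback l g)))
    (j : J) : Set.BijOn k (f ⁻¹' {j}) (g ⁻¹' {l j}) := by
  refine ⟨?mapsTo, ?injOn, ?surjOn⟩
  case mapsTo =>
    rintro i (rfl : f i = j)
    exact (hcomm i).symm
  case injOn =>
    rintro a (ha : f a = j) b (hb : f b = j) hab
    exact hbij.1 (Subtype.ext (Prod.ext (ha.trans hb.symm) hab))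
  case surjOn =>
    intro z (hz : g z = l j)
    obtain ⟨i, hi⟩ := hbij.2 ⟨(j, z), hz.symm⟩
    exact ⟨i, show f i = j from congrArg (·.1.1) hi, congrArg (·.1.2) hi⟩

theorem fiberwise_prod_beck_chevalley {M : Type*} [CommMonoid M]
    {I J K L : Type*} [Fintype I] [Fintype L] [DecidableEq J] [DecidableEq K]
    (f : I → J) (k : I → L) (l : J → K) (g : L → K)
    (hcomm : ∀ i, l (f i) = g (k i))
    (hbij : Function.Bijective
      (fun i => (⟨(f i, k i), hcomm i⟩ : {p : J × L // l p.1 = g p.2})))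
    (y : L → M) (j : J) :
    ∏ i ∈ Finset.univ.filter (fun i => f i = j), y (k i)
      = ∏ z ∈ Finset.univ.filter (fun z => g z = l j), y z := by
  have hfiber : Set.BijOn k ↑(univ.filter (f · = j)) ↑(univ.filter (g · = l j)) := by
    simpa [Set.preimage] using bijOn_fiber_of_bijective_toPullback hcomm hbij j
  exact prod_nbij k (fun _ hi => hfiber.mapsTo hi) hfiber.injOn hfiber.surjOn fun _ _ => rfl
end

section
/- Let I and J be finite types. Consider spans (S, p, q) where S is a finite type, p : S → I and q : S → J; call two spans (S, p, q) and (S', p', q') isomorphic if there is a bijection e : S ≃ S' with p' ∘ e = p and q' ∘ e = q. Then the assignment sending a span (S, p, q) to the function I × J → ℕ given by (i, j) ↦ card {s : S // p s = i ∧ q s = j} induces a bijection between the set of isomorphism classes of such spans (with S ranging over finite types in a fixed universe) and the set of functions I × J → ℕ. -/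
universe u

/-- A span between `I` and `J` with a finite apex. -/
structure FinSpan (I J : Type u) : Type (u + 1) where
  S : Type u
  [fin : Fintype S]
  p : S → I
  q : S → J

attribute [instance] FinSpan.fin

/-- Two spans are isomorphic if there is a bijection of apexes commuting
with both legs. -/
def FinSpan.Iso {I J : Type u} (A B : FinSpan I J) : Prop :=
  ∃ e : A.S ≃ B.S, B.p ∘ e = A.p ∧ B.q ∘ e = A.q

/-- The matrix of cardinalities of the fibers of a span. -/
noncomputable def FinSpan.card {I J : Type u} (A : FinSpan I J) : I × J → ℕ :=
  fun ij =>
    letI : DecidablePred fun s => A.p s = ij.1 ∧ A.q s = ij.2 := Classical.decPred _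
    Fintype.card {s : A.S // A.p s = ij.1 ∧ A.q s = ij.2}

/-!
A span `(S, p, q)` is the same thing as a map `S → I × J`, and `card` counts its fibers.
Two maps into a common target differ by a bijection of their finite domains exactly when
their fibers have equal cardinalities (match the fibers one by one), which gives injectivity.
For surjectivity, the sigma type `Σ ij, Fin (g ij)` over `I × J` has fibers of size `g`.
-/

theorem exists_equiv_comp_eq_iff_card_fiber_eq {α β γ : Type*} [Finite α] [Finite β]
    (f : α → γ) (g : β → γ) :
    (∃ e : α ≃ β, g ∘ e = f) ↔ ∀ c, Nat.card {a // f a = c} = Nat.card {b // g b = c} := by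
  constructor
  · rintro ⟨e, rfl⟩ c
    exact Nat.card_congr (e.subtypeEquiv fun _ => Iff.rfl)
  · intro h
    let e c := (Finite.card_eq.mp (h c)).some
    exact ⟨Equiv.ofFiberEquiv e, funext (Equiv.ofFiberEquiv_map e)⟩

namespace FinSpan

variable {I J : Type u}

def leg (A : FinSpan I J) (s : A.S) : I × J := (A.p s, A.q s)

theorem card_eq_natCard_fiber (A : FinSpan I J) (ij : I × J) :
    A.card ij = Nat.card {s // A.leg s = ij} := by
  classical
  rw [card, Fintype.card_eq_nat_card]
  exact Nat.card_congr (Equiv.subtypeEquivRight fun s => (Prod.ext_iff : A.leg s = ij ↔ _).symm)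

theorem iso_iff_exists_leg_comp_eq (A B : FinSpan I J) :
    A.Iso B ↔ ∃ e : A.S ≃ B.S, B.leg ∘ e = A.leg := by
  simp only [Iso, leg, funext_iff, Function.comp_apply, Prod.ext_iff, forall_and]

theorem iso_iff_card_eq (A B : FinSpan I J) : A.Iso B ↔ A.card = B.card := by
  rw [iso_iff_exists_leg_comp_eq, exists_equiv_comp_eq_iff_card_fiber_eq, funext_iff]
  simp only [card_eq_natCard_fiber]

noncomputable def ofCard [Fintype I] [Fintype J] (g : I × J → ℕ) : FinSpan I J where
  S := Σ ij : I × J, ULift.{u} (Fin (g ij))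
  p x := x.1.1
  q x := x.1.2

theorem card_ofCard [Fintype I] [Fintype J] (g : I × J → ℕ) : (ofCard g).card = g := by
  funext ij
  rw [card_eq_natCard_fiber]
  exact (Nat.card_congr (Equiv.sigmaSubtype ij)).trans (by simp)

end FinSpan

theorem finSpan_quotient_equiv_matrices
    (I J : Type u) [Fintype I] [Fintype J] :
    Nonempty { e : Quot (FinSpan.Iso (I := I) (J := J)) ≃ (I × J → ℕ) //
      ∀ A : FinSpan I J, e (Quot.mk _ A) = A.card } := by
  let card : Quot (FinSpan.Iso (I := I) (J := J)) → (I × J → ℕ) :=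
    Quot.lift FinSpan.card fun A B => (A.iso_iff_card_eq B).mp
  have injective : Function.Injective card := by
    rintro ⟨A⟩ ⟨B⟩ h
    exact Quot.sound ((A.iso_iff_card_eq B).mpr h)
  have surjective : Function.Surjective card := fun g =>
    ⟨Quot.mk _ (FinSpan.ofCard g), FinSpan.card_ofCard g⟩
  exact ⟨⟨Equiv.ofBijective card ⟨injective, surjective⟩, fun _ => rfl⟩⟩
end
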